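/- If y = {x_1, ..., x_n} is a hereditarily finite set with n ≥ 1 distinct elements listed so that ark(x_i) ≤ ark(x_{i+1}) for all 1 ≤ i ≤ n−1, then ark(y) = max{ ark(x_j) + n − j : 1 ≤ j ≤ n } + 1. -/

import Mathlib

open ZFSet Finset

noncomputable section

abbrev HFSet := ZFSet.{0}

/-- The adjunctive hierarchy of hereditarily finite sets. -/
def A : ℕ → Set HFSet
  | 0 => {∅}
  | n + 1 => {∅} ∪ {z | ∃ x ∈ A n, ∃ y ∈ A n, z = insert y x}

/-- Integer-indexed version, with `A n = ∅` for `n < 0`. -/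
def Az (n : ℤ) : Set HFSet := if 0 ≤ n then A n.toNat else ∅

/-- The cumulative hierarchy (von Neumann) of hereditarily finite sets. -/
def W : ℕ → HFSet
  | 0 => ∅
  | n + 1 => ZFSet.powerset (W n)

/-- A ZF set is hereditarily finite if it lies in some finite level of the
cumulative hierarchy. -/
def IsHF (x : HFSet) : Prop := ∃ n, x ∈ W n

/-- The adjunctive rank. -/
def ark (x : HFSet) : ℕ := sInf {n | x ∈ A n}

/-- The (von Neumann) rank of a hereditarily finite set. -/
def rk (x : HFSet) : ℕ := sInf {n | x ∈ W (n + 1)}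

/-- `B n m` = sets in `A n \ A (n-1)` all of whose elements lie in `A m`. -/
def B (n m : ℤ) : Set HFSet :=
  {x | x ∈ Az n ∧ x ∉ Az (n - 1) ∧ ∀ y, y ∈ x → y ∈ Az m}

def b (n m : ℤ) : ℕ := (B n m).ncard

def a (n : ℕ) : ℕ := (A n).ncard

def c (n : ℕ) : ℕ := (Az n \ Az ((n : ℤ) - 1)).ncard

/-! ### Auxiliary lemmas -/

lemma ZFSet.mem_toSet (a u : ZFSet.{0}) : a ∈ u.toSet ↔ a ∈ u := Iff.rfl

lemma ZFSet.toSet_empty : ZFSet.toSet (∅ : ZFSet.{0}) = ∅ := ZFSet.coe_empty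

lemma ZFSet.toSet_injective : Function.Injective (ZFSet.toSet : ZFSet.{0} → Set ZFSet.{0}) :=
  SetLike.coe_injective

lemma ZFSet.toSet_subset_iff {x y : ZFSet.{0}} : x.toSet ⊆ y.toSet ↔ x ⊆ y := ZFSet.coe_subset_coe

lemma mem_A_succ_iff {n : ℕ} {z : HFSet} :
    z ∈ A (n + 1) ↔ z = ∅ ∨ ∃ x ∈ A n, ∃ y ∈ A n, z = insert y x := by
  simp [A, Set.mem_union, Set.mem_singleton_iff, Set.mem_setOf_eq]

lemma mem_A_zero_iff {z : HFSet} : z ∈ A 0 ↔ z = ∅ := by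
  simp [A]

lemma A_mono : ∀ n, A n ⊆ A (n + 1) := by
  intro n
  induction n with
  | zero =>
    intro z hz
    exact mem_A_succ_iff.2 (Or.inl (mem_A_zero_iff.1 hz))
  | succ n ih =>
    intro z hz
    rcases mem_A_succ_iff.1 hz with h | ⟨x, hx, w, hw, rfl⟩
    · exact mem_A_succ_iff.2 (Or.inl h)
    · exact mem_A_succ_iff.2 (Or.inr ⟨x, ih hx, w, ih hw, rfl⟩)

lemma A_le_mono {m n : ℕ} (h : m ≤ n) : A m ⊆ A n := by
  induction n with
  | zero => simpa [Nat.le_zero.1 h]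
  | succ n ih =>
    rcases Nat.lt_or_ge m (n + 1) with h' | h'
    · exact fun z hz => A_mono n (ih (Nat.lt_succ_iff.1 h') hz)
    · have : m = n + 1 := le_antisymm h h'
      simp [this]

lemma empty_mem_A (n : ℕ) : ∅ ∈ A n := by
  cases n with
  | zero => exact mem_A_zero_iff.2 rfl
  | succ n => exact mem_A_succ_iff.2 (Or.inl rfl)

lemma insert_mem_A {n : ℕ} {x y : HFSet} (hx : x ∈ A n) (hy : y ∈ A n) :
    insert y x ∈ A (n + 1) :=
  mem_A_succ_iff.2 (Or.inr ⟨x, hx, y, hy, rfl⟩)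

lemma A_subset_closed : ∀ n, ∀ z ∈ A n, ∀ w : HFSet, (∀ u, u ∈ w → u ∈ z) → w ∈ A n := by
  intro n
  induction n with
  | zero =>
    intro z hz w hw
    have hz0 : z = ∅ := mem_A_zero_iff.1 hz
    have : w = ∅ := by
      rw [ZFSet.eq_empty]
      intro u hu
      exact ZFSet.notMem_empty u (hz0 ▸ hw u hu)
    exact mem_A_zero_iff.2 this
  | succ n ih =>
    intro z hz w hw
    rcases mem_A_succ_iff.1 hz with rfl | ⟨x, hx, v, hv, rfl⟩
    · have : w = ∅ := by
        rw [ZFSet.eq_empty]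
        intro u hu
        exact ZFSet.notMem_empty u (hw u hu)
      rw [this]; exact empty_mem_A _
    · set w₀ := ZFSet.sep (· ∈ x) w with hw₀
      have hw₀x : ∀ u, u ∈ w₀ → u ∈ x := fun u hu => (ZFSet.mem_sep.1 hu).2
      have hw₀A : w₀ ∈ A n := ih x hx w₀ hw₀x
      by_cases hvw : v ∈ w
      · have hwi : w = insert v w₀ := by
          apply ZFSet.ext; intro u
          constructor
          · intro hu
            rcases ZFSet.mem_insert_iff.1 (hw u hu) with rfl | hux
            · exact ZFSet.mem_insert_iff.2 (Or.inl rfl)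
            · exact ZFSet.mem_insert_iff.2 (Or.inr (ZFSet.mem_sep.2 ⟨hu, hux⟩))
          · intro hu
            rcases ZFSet.mem_insert_iff.1 hu with rfl | hu
            · exact hvw
            · exact (ZFSet.mem_sep.1 hu).1
        rw [hwi]; exact insert_mem_A hw₀A hv
      · have hwi : w = w₀ := by
          apply ZFSet.ext; intro u
          constructor
          · intro hu
            rcases ZFSet.mem_insert_iff.1 (hw u hu) with rfl | hux
            · exact absurd hu hvw
            · exact ZFSet.mem_sep.2 ⟨hu, hux⟩
          · intro hu; exact (ZFSet.mem_sep.1 hu).1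
        rw [hwi]; exact A_mono n hw₀A

lemma ark_le {x : HFSet} {n : ℕ} (h : x ∈ A n) : ark x ≤ n := Nat.sInf_le h

lemma mem_A_ark {x : HFSet} (h : ∃ n, x ∈ A n) : x ∈ A (ark x) := Nat.sInf_mem h

lemma W_toSet_finite : ∀ n, (W n).toSet.Finite := by
  intro n
  induction n with
  | zero => simp [W, ZFSet.toSet_empty]
  | succ n ih =>
    have h1 : {s : Set HFSet | s ⊆ (W n).toSet}.Finite := ih.finite_subsets
    have h2 : (ZFSet.toSet ⁻¹' {s : Set HFSet | s ⊆ (W n).toSet}).Finite :=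
      h1.preimage (Set.injOn_of_injective ZFSet.toSet_injective)
    apply h2.subset
    intro u hu
    have hu' : u ∈ ZFSet.powerset (W n) := by
      rw [ZFSet.mem_toSet] at hu
      simpa [W] using hu
    have : u ⊆ W n := ZFSet.mem_powerset.1 hu'
    exact ZFSet.toSet_subset_iff.2 this

lemma list_mem_A : ∀ l : List HFSet, ∀ x : HFSet,
    (∀ u : HFSet, u ∈ x ↔ u ∈ l) → (∀ u ∈ l, ∃ m, u ∈ A m) → ∃ m, x ∈ A m := by
  intro l
  induction l with
  | nil =>
    intro x hx _
    have : x = ∅ := by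
      rw [ZFSet.eq_empty]
      intro u hu
      simpa using (hx u).1 hu
    exact ⟨0, mem_A_zero_iff.2 this⟩
  | cons v l ih =>
    intro x hx hA
    set x' := ZFSet.sep (· ∈ l) x with hx'
    have hx'mem : ∀ u : HFSet, u ∈ x' ↔ u ∈ l := by
      intro u
      constructor
      · intro hu; exact (ZFSet.mem_sep.1 hu).2
      · intro hu
        exact ZFSet.mem_sep.2 ⟨(hx u).2 (List.mem_cons_of_mem _ hu), hu⟩
    obtain ⟨m₁, hm₁⟩ := ih x' hx'mem fun u hu => hA u (List.mem_cons_of_mem _ hu)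
    obtain ⟨m₂, hm₂⟩ := hA v List.mem_cons_self
    have hxins : x = insert v x' := by
      apply ZFSet.ext; intro u
      rw [ZFSet.mem_insert_iff, hx u, List.mem_cons]
      constructor
      · rintro (rfl | hu)
        · exact Or.inl rfl
        · exact Or.inr ((hx'mem u).2 hu)
      · rintro (rfl | hu)
        · exact Or.inl rfl
        · exact Or.inr ((hx'mem u).1 hu)
    refine ⟨max m₁ m₂ + 1, ?_⟩
    rw [hxins]
    exact insert_mem_A (A_le_mono (le_max_left _ _) hm₁) (A_le_mono (le_max_right _ _) hm₂)

lemma mem_W_mem_A : ∀ n, ∀ x : HFSet, x ∈ W n → ∃ m, x ∈ A m := by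
  intro n
  induction n with
  | zero =>
    intro x hx
    exact absurd (by simpa [W] using hx) (ZFSet.notMem_empty x)
  | succ n ih =>
    intro x hx
    have hsub : x ⊆ W n := ZFSet.mem_powerset.1 (by simpa [W] using hx)
    have hfin : x.toSet.Finite := (W_toSet_finite n).subset (ZFSet.toSet_subset_iff.2 hsub)
    apply list_mem_A hfin.toFinset.toList x
    · intro u
      rw [Finset.mem_toList, Set.Finite.mem_toFinset, ZFSet.mem_toSet]
    · intro u hu
      rw [Finset.mem_toList, Set.Finite.mem_toFinset, ZFSet.mem_toSet] at hu
      exact ih u (hsub hu)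

lemma isHF_mem_A {x : HFSet} (h : IsHF x) : ∃ m, x ∈ A m := by
  obtain ⟨n, hn⟩ := h
  exact mem_W_mem_A n x hn

/-- The set obtained by removing `xs i`. -/
lemma remove_descr {n : ℕ} (xs : Fin (n + 1) → HFSet) (y : HFSet)
    (hinj : Function.Injective xs) (hy : ∀ z : HFSet, z ∈ y ↔ ∃ i, z = xs i)
    (i : Fin (n + 1)) :
    (∀ u : HFSet, u ∈ ZFSet.sep (· ≠ xs i) y ↔ ∃ j : Fin n, u = xs (i.succAbove j)) ∧
      y = insert (xs i) (ZFSet.sep (· ≠ xs i) y) := by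
  constructor
  · intro u
    rw [ZFSet.mem_sep, hy u]
    constructor
    · rintro ⟨⟨j, rfl⟩, hne⟩
      have hji : j ≠ i := fun h => hne (by rw [h])
      obtain ⟨j', hj'⟩ := Fin.exists_succAbove_eq hji
      exact ⟨j', by rw [hj']⟩
    · rintro ⟨j', rfl⟩
      refine ⟨⟨_, rfl⟩, fun h => ?_⟩
      exact Fin.succAbove_ne i j' (hinj h)
  · apply ZFSet.ext; intro u
    rw [ZFSet.mem_insert_iff, ZFSet.mem_sep]
    constructor
    · intro hu
      by_cases h : u = xs i
      · exact Or.inl h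
      · exact Or.inr ⟨hu, h⟩
    · rintro (rfl | ⟨hu, _⟩)
      · exact (hy _).2 ⟨i, rfl⟩
      · exact hu

lemma key : ∀ n : ℕ, 1 ≤ n → ∀ xs : Fin n → HFSet, ∀ y : HFSet,
    Function.Injective xs → (∀ i, IsHF (xs i)) →
    (∀ z : HFSet, z ∈ y ↔ ∃ i, z = xs i) →
    (∀ i j : Fin n, i ≤ j → ark (xs i) ≤ ark (xs j)) →
    y ∈ A ((Finset.univ.sup fun j : Fin n => ark (xs j) + (n - 1 - (j : ℕ))) + 1) ∧
      ark y = (Finset.univ.sup fun j : Fin n => ark (xs j) + (n - 1 - (j : ℕ))) + 1 := by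
  intro n
  induction n using Nat.strong_induction_on with
  | _ n IH =>
  intro hn xs y hinj hhf hy hmono
  obtain ⟨m, rfl⟩ : ∃ m, n = m + 1 := ⟨n - 1, by omega⟩
  set M₀ := Finset.univ.sup fun j : Fin (m + 1) => ark (xs j) + (m + 1 - 1 - (j : ℕ)) with hM₀
  -- the last element
  have hlastval : ((Fin.last m : Fin (m + 1)) : ℕ) = m := rfl
  -- Part A : membership in `A (M₀ + 1)`
  obtain ⟨hmem_last, hins_last⟩ := remove_descr xs y hinj hy (Fin.last m)
  set y' := ZFSet.sep (· ≠ xs (Fin.last m)) y with hy'def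
  have hsup : ∀ j : Fin (m + 1), ark (xs j) + (m + 1 - 1 - (j : ℕ)) ≤ M₀ := by
    intro j
    rw [hM₀]
    exact Finset.le_sup (f := fun j : Fin (m + 1) => ark (xs j) + (m + 1 - 1 - (j : ℕ)))
      (Finset.mem_univ j)
  have hy'A : y' ∈ A M₀ := by
    rcases Nat.eq_zero_or_pos m with rfl | hm
    · -- y' is empty
      have : y' = ∅ := by
        rw [ZFSet.eq_empty]
        intro u hu
        obtain ⟨j, _⟩ := (hmem_last u).1 hu
        exact j.elim0
      rw [this]; exact empty_mem_A _
    · -- use the induction hypothesis on the first m elements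
      have hIH := IH m (by omega) hm (fun j : Fin m => xs ((Fin.last m).succAbove j)) y'
        (hinj.comp (Fin.succAbove_right_injective))
        (fun j => hhf _) hmem_last
        (fun i j hij => hmono _ _ ((Fin.strictMono_succAbove (Fin.last m)).monotone hij))
      beta_reduce at hIH
      have hy'V := hIH.1
      have hV'le :
          (Finset.univ.sup fun j : Fin m =>
              ark (xs ((Fin.last m).succAbove j)) + (m - 1 - (j : ℕ))) + 1 ≤ M₀ := by
        have h0 : 0 < M₀ := by
          have := hsup 0
          simp only [Fin.val_zero] at this
          omega
        rw [Nat.add_one_le_iff]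
        rw [Finset.sup_lt_iff h0]
        intro j' _
        have hcast : ((Fin.last m).succAbove j' : ℕ) = (j' : ℕ) := by
          rw [Fin.succAbove_last]
          rfl
        have h3 := hsup ((Fin.last m).succAbove j')
        rw [hcast] at h3
        have hj'm : (j' : ℕ) < m := j'.isLt
        omega
      exact A_le_mono hV'le hy'V
  have hzA : xs (Fin.last m) ∈ A M₀ := by
    have h1 : xs (Fin.last m) ∈ A (ark (xs (Fin.last m))) :=
      mem_A_ark (isHF_mem_A (hhf _))
    have h2 : ark (xs (Fin.last m)) ≤ M₀ := by
      have := hsup (Fin.last m)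
      rw [hlastval] at this
      omega
    exact A_le_mono h2 h1
  have hymem : y ∈ A (M₀ + 1) := by
    rw [hins_last]
    exact insert_mem_A hy'A hzA
  refine ⟨hymem, ?_⟩
  have hub : ark y ≤ M₀ + 1 := ark_le hymem
  -- Part B : lower bound
  have hne : y ≠ ∅ := by
    intro h
    have : xs 0 ∈ y := (hy _).2 ⟨0, rfl⟩
    rw [h] at this
    exact ZFSet.notMem_empty _ this
  have hyark : y ∈ A (ark y) := mem_A_ark ⟨M₀ + 1, hymem⟩
  have hpos : 1 ≤ ark y := by
    by_contra h
    have h0 : ark y = 0 := by omega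
    rw [h0] at hyark
    exact hne (mem_A_zero_iff.1 hyark)
  obtain ⟨k, hk⟩ : ∃ k, ark y = k + 1 := ⟨ark y - 1, by omega⟩
  rw [hk] at hyark
  rcases mem_A_succ_iff.1 hyark with h | ⟨x, hx, z, hz, hyi⟩
  · exact absurd h hne
  obtain ⟨i, rfl⟩ : ∃ i, z = xs i := (hy z).1 (hyi ▸ ZFSet.mem_insert z x)
  obtain ⟨hmem_i, _⟩ := remove_descr xs y hinj hy i
  set y₂ := ZFSet.sep (· ≠ xs i) y with hy₂def
  have hy₂A : y₂ ∈ A k := by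
    apply A_subset_closed k x hx y₂
    intro u hu
    have h1 := ZFSet.mem_sep.1 hu
    have h2 : u ∈ insert (xs i) x := hyi ▸ h1.1
    rcases ZFSet.mem_insert_iff.1 h2 with rfl | h3
    · exact absurd rfl h1.2
    · exact h3
  have hzk : ark (xs i) ≤ k := ark_le hz
  have hlb : M₀ ≤ k := by
    rw [hM₀]
    apply Finset.sup_le
    intro j _
    rcases Nat.eq_zero_or_pos m with rfl | hm
    · -- n = 1, so j = i = 0
      have hji : j = i := Fin.ext (by have := j.isLt; have := i.isLt; omega)
      have : (j : ℕ) = 0 := by omega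
      rw [hji]
      omega
    · -- use the induction hypothesis on y₂
      have hIH := IH m (by omega) hm (fun j' : Fin m => xs (i.succAbove j')) y₂
        (hinj.comp (Fin.succAbove_right_injective))
        (fun j => hhf _) hmem_i
        (fun a b hab => hmono _ _ ((Fin.strictMono_succAbove i).monotone hab))
      beta_reduce at hIH
      have hy₂k : ark y₂ ≤ k := ark_le hy₂A
      rw [hIH.2] at hy₂k
      have hterm : ∀ j' : Fin m, ark (xs (i.succAbove j')) + (m - 1 - (j' : ℕ)) + 1 ≤ k := by
        intro j'
        have h4 : ark (xs (i.succAbove j')) + (m - 1 - (j' : ℕ)) ≤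
            Finset.univ.sup fun j' : Fin m => ark (xs (i.succAbove j')) + (m - 1 - (j' : ℕ)) :=
          Finset.le_sup (f := fun j' : Fin m => ark (xs (i.succAbove j')) + (m - 1 - (j' : ℕ)))
            (Finset.mem_univ j')
        omega
      by_cases hji : j = i
      · subst hji
        by_cases hjm : (j : ℕ) = m
        · omega
        · have hjlt : (j : ℕ) < m := by have := j.isLt; omega
          set j' : Fin m := ⟨(j : ℕ), hjlt⟩ with hj'def
          have hsa : j.succAbove j' = j'.succ := by
            apply Fin.succAbove_of_le_castSucc
            rw [Fin.le_def]
            simp [hj'def]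
          have hsaval : (j.succAbove j' : ℕ) = (j : ℕ) + 1 := by
            rw [hsa]; simp [hj'def]
          have hmle : ark (xs j) ≤ ark (xs (j.succAbove j')) := by
            apply hmono
            rw [Fin.le_def, hsaval]
            omega
          have := hterm j'
          have hj'val : (j' : ℕ) = (j : ℕ) := rfl
          omega
      · obtain ⟨j', hj'⟩ := Fin.exists_succAbove_eq hji
        have hcoe : (j : ℕ) = (j' : ℕ) ∨ (j : ℕ) = (j' : ℕ) + 1 := by
          rcases lt_or_ge (j'.castSucc) i with h | h
          · left
            rw [← hj', Fin.succAbove_of_castSucc_lt _ _ h]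
            rfl
          · right
            rw [← hj', Fin.succAbove_of_le_castSucc _ _ h]
            rfl
        have := hterm j'
        rw [hj'] at this
        have hj'm : (j' : ℕ) < m := j'.isLt
        omega
  omega

theorem stmt4 (n : ℕ) (hn : 1 ≤ n) (xs : Fin n → HFSet) (y : HFSet)
    (hinj : Function.Injective xs) (hhf : ∀ i, IsHF (xs i))
    (hy : ∀ z, z ∈ y ↔ ∃ i, z = xs i)
    (hmono : ∀ i j : Fin n, i ≤ j → ark (xs i) ≤ ark (xs j)) :
    ark y = (Finset.univ.sup fun j : Fin n => ark (xs j) + (n - 1 - (j : ℕ))) + 1 := by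
  exact (key n hn xs y hinj hhf hy hmono).2
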